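/- The operator-splitting scheme μ^k_{t} (alternating half-steps μ ↦ μ + Δt·h[μ] for the source and push-forward by the flow of V[μ] for the transport, with Δt = T/2^k) preserves probability: if μ₀ ∈ P(ℝ^d) and 2^k ≥ S̄·T, then μ^k_t ∈ P(ℝ^d) for all t ∈ [0,T]. -/

import Mathlib

open MeasureTheory
open scoped NNReal

/-- Integral of a scalar function against a finite signed measure. -/
noncomputable def sIntR {d : ℕ} (μ : SignedMeasure (EuclideanSpace ℝ (Fin d)))
    (f : EuclideanSpace ℝ (Fin d) → ℝ) : ℝ :=
  (∫ y, f y ∂μ.toJordanDecomposition.posPart) -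
    (∫ y, f y ∂μ.toJordanDecomposition.negPart)

/-- Iterated integral against a signed measure. -/
noncomputable def iterInt {d : ℕ} (μ : SignedMeasure (EuclideanSpace ℝ (Fin d))) :
    (q : ℕ) → ((Fin q → EuclideanSpace ℝ (Fin d)) → ℝ) → ℝ
  | 0, F => F Fin.elim0
  | (q + 1), F => sIntR μ (fun y => iterInt μ q (fun ys => F (Fin.cons y ys)))

/-- The non-local vector field `V[μ](x) = ∫ φ(x - y) dμ(y)`. -/
noncomputable def Vfield {d : ℕ} (φ : EuclideanSpace ℝ (Fin d) → EuclideanSpace ℝ (Fin d))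
    (μ : SignedMeasure (EuclideanSpace ℝ (Fin d))) (x : EuclideanSpace ℝ (Fin d)) :
    EuclideanSpace ℝ (Fin d) :=
  (∫ y, φ (x - y) ∂μ.toJordanDecomposition.posPart) -
    (∫ y, φ (x - y) ∂μ.toJordanDecomposition.negPart)

/-- Value on a set `A` of the source term `h[ν]`, the signed measure with density
`x ↦ ∫⋯∫ S(x,y₁,…,y_q) dν^{⊗q}` with respect to `ν`. -/
noncomputable def srcVal {d q : ℕ} (S : (Fin (q + 1) → EuclideanSpace ℝ (Fin d)) → ℝ)
    (ν : SignedMeasure (EuclideanSpace ℝ (Fin d))) (A : Set (EuclideanSpace ℝ (Fin d))) : ℝ :=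
  (∫ x in A, iterInt ν q (fun ys => S (Fin.cons x ys)) ∂ν.toJordanDecomposition.posPart) -
    (∫ x in A, iterInt ν q (fun ys => S (Fin.cons x ys)) ∂ν.toJordanDecomposition.negPart)

/-- The operator-splitting scheme `𝕊` with time step `Δt = T/2^k`: on each interval
`[nΔt, (n+½)Δt]` a source half-step `μ_t = μ_{nΔt} + 2(t-nΔt) h[μ_{nΔt}]`, and on
`[(n+½)Δt, (n+1)Δt]` a transport half-step by the flow of the frozen vector field
`V[μ_{nΔt}]`. -/
def IsScheme {d q : ℕ} (φ : EuclideanSpace ℝ (Fin d) → EuclideanSpace ℝ (Fin d))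
    (S : (Fin (q + 1) → EuclideanSpace ℝ (Fin d)) → ℝ) (T : ℝ) (k : ℕ)
    (μ : ℝ → SignedMeasure (EuclideanSpace ℝ (Fin d))) : Prop :=
  ∀ n : ℕ, n < 2 ^ k →
    (∃ H : SignedMeasure (EuclideanSpace ℝ (Fin d)),
      (∀ A, MeasurableSet A → H A = srcVal S (μ (n * (T / 2 ^ k))) A) ∧
      ∀ t ∈ Set.Ioc ((n : ℝ) * (T / 2 ^ k)) (((n : ℝ) + 1 / 2) * (T / 2 ^ k)),
        μ t = μ ((n : ℝ) * (T / 2 ^ k)) + (2 * (t - (n : ℝ) * (T / 2 ^ k))) • H) ∧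
    (∃ Φ : ℝ → EuclideanSpace ℝ (Fin d) → EuclideanSpace ℝ (Fin d),
      (∀ x, Φ 0 x = x) ∧
      (∀ x s, HasDerivAt (fun u => Φ u x)
        (Vfield φ (μ ((n : ℝ) * (T / 2 ^ k))) (Φ s x)) s) ∧
      (∀ s, Measurable (Φ s)) ∧
      ∀ t ∈ Set.Ioc (((n : ℝ) + 1 / 2) * (T / 2 ^ k)) (((n : ℝ) + 1) * (T / 2 ^ k)),
        μ t = VectorMeasure.map (μ (((n : ℝ) + 1 / 2) * (T / 2 ^ k)))
          (Φ (2 * (t - ((n : ℝ) + 1 / 2) * (T / 2 ^ k)))))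

/-! A nonnegative signed measure of mass one is `P.toSignedMeasure` for a probability measure `P`,
and then the source term is `h[P](A) = ∫_A g dP` with `|g| ≤ S̄` and
`h[P](ℝ^d) = ∫ S dP^{⊗(q+1)} = 0`, the last integral vanishing because `S` is odd under a swap
of two arguments while `P^{⊗(q+1)}` is invariant under it. A source step of length `c ≤ Δt`
therefore keeps the mass equal to one and gives `(P + c h[P])(A) ≥ (1 - c S̄) P(A) ≥ 0` as soon
as `Δt S̄ ≤ 1`, i.e. `2^k ≥ S̄ T`; a push-forward by a measurable flow map preserves both
properties, and induction over the `2^k` steps concludes. -/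

namespace MeasureTheory

variable {α : Type*} [MeasurableSpace α]

def SignedMeasure.IsProbability (ν : SignedMeasure α) : Prop :=
  (∀ A, MeasurableSet A → 0 ≤ ν A) ∧ ν Set.univ = 1

namespace SignedMeasure.IsProbability

theorem exists_eq_toSignedMeasure {ν : SignedMeasure α} (hν : ν.IsProbability) :
    ∃ (P : Measure α) (_ : IsProbabilityMeasure P), ν = P.toSignedMeasure := by
  have hle : 0 ≤[Set.univ] ν :=
    (VectorMeasure.restrict_le_restrict_iff _ _ .univ).2 fun A hA _ => by simpa using hν.1 A hA
  refine ⟨ν.toMeasureOfZeroLE Set.univ .univ hle, ⟨?_⟩,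
    (toMeasureOfZeroLE_toSignedMeasure ν hle).symm⟩
  rw [← ENNReal.toReal_eq_one_iff, toMeasureOfZeroLE_apply ν hle .univ .univ]
  simp [hν.2]

theorem add_smul {ν H : SignedMeasure α} (hν : ν.IsProbability) {C c : ℝ}
    (hH : ∀ A, MeasurableSet A → -(C * ν A) ≤ H A) (hH_univ : H Set.univ = 0)
    (hc : 0 ≤ c) (hcC : c * C ≤ 1) : (ν + c • H).IsProbability := by
  refine ⟨fun A hA => ?_, ?_⟩
  · have hνA := hν.1 A hA
    have hcH := mul_le_mul_of_nonneg_left (hH A hA) hc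
    change 0 ≤ ν A + c * H A
    nlinarith [mul_nonneg (sub_nonneg.2 hcC) hνA]
  · simp [hν.2, hH_univ]

theorem map {β : Type*} [MeasurableSpace β] {ν : SignedMeasure α} (hν : ν.IsProbability)
    {f : α → β} (hf : Measurable f) : SignedMeasure.IsProbability (ν.map f) :=
  ⟨fun A hA => by rw [VectorMeasure.map_apply ν hf hA]; exact hν.1 _ (hf hA),
    by rw [VectorMeasure.map_apply ν hf .univ, Set.preimage_univ, hν.2]⟩

end SignedMeasure.IsProbability

theorem Measure.toSignedMeasure_toJordanDecomposition (P : Measure α) [IsFiniteMeasure P] :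
    P.toSignedMeasure.toJordanDecomposition = ⟨P, 0, .zero_right⟩ :=
  SignedMeasure.toJordanDecomposition_eq <| by
    simp [JordanDecomposition.toSignedMeasure, Measure.toSignedMeasure_zero]

theorem _root_.MeasurableEquiv.piFinSuccAbove_zero_symm_apply {n : ℕ} (p : α × (Fin n → α)) :
    (MeasurableEquiv.piFinSuccAbove (fun _ : Fin (n + 1) => α) 0).symm p = Fin.cons p.1 p.2 := by
  rw [MeasurableEquiv.piFinSuccAbove_symm_apply]
  exact Fin.insertNth_zero' _ _

theorem measurable_finCons (n : ℕ) :
    Measurable fun p : α × (Fin n → α) => (Fin.cons p.1 p.2 : Fin (n + 1) → α) := by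
  convert (MeasurableEquiv.piFinSuccAbove (fun _ : Fin (n + 1) => α) 0).symm.measurable
  exact (MeasurableEquiv.piFinSuccAbove_zero_symm_apply _).symm

theorem integral_pi_fin_succ {n : ℕ} (P : Measure α) [SigmaFinite P]
    {F : (Fin (n + 1) → α) → ℝ} (hF : Integrable F (Measure.pi fun _ => P)) :
    ∫ y, F y ∂(Measure.pi fun _ => P) =
      ∫ x, ∫ ys, F (Fin.cons x ys) ∂(Measure.pi fun _ => P) ∂P := by
  set e := (MeasurableEquiv.piFinSuccAbove (fun _ : Fin (n + 1) => α) 0).symm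
  have he : MeasurePreserving e _ _ := (measurePreserving_piFinSuccAbove (fun _ => P) 0).symm
  rw [← he.integral_comp', integral_prod (fun z => F (e z)) ((he.integrable_comp_emb
    (MeasurableEquiv.measurableEmbedding _)).2 hF)]
  simp only [e, MeasurableEquiv.piFinSuccAbove_zero_symm_apply]

theorem integral_pi_eq_zero_of_swap {ι : Type*} [Fintype ι] [DecidableEq ι] (P : Measure α)
    [SigmaFinite P] {F : (ι → α) → ℝ} {i j : ι}
    (hF : ∀ y, F y = -F (fun m => y (Equiv.swap i j m))) :
    ∫ y, F y ∂(Measure.pi fun _ => P) = 0 := by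
  have h := (measurePreserving_piCongrLeft (fun _ : ι => P) (Equiv.swap i j)).integral_comp' F
  have hswap : ∀ y, F (MeasurableEquiv.piCongrLeft (fun _ => α) (Equiv.swap i j) y) = -F y := by
    intro y
    rw [hF (MeasurableEquiv.piCongrLeft _ _ y)]
    congr 2
    ext m
    exact Equiv.piCongrLeft_apply_apply (fun _ => α) (Equiv.swap i j) y m
  simp only [hswap, integral_neg] at h
  linarith

end MeasureTheory

section SourceTerm

variable {d : ℕ}

local notation "E" => EuclideanSpace ℝ (Fin d)

theorem sIntR_toSignedMeasure (P : Measure E) [IsFiniteMeasure P] (f : E → ℝ) :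
    sIntR P.toSignedMeasure f = ∫ y, f y ∂P := by
  simp [sIntR, Measure.toSignedMeasure_toJordanDecomposition]

theorem iterInt_toSignedMeasure (P : Measure E) [IsFiniteMeasure P] {C : ℝ} :
    ∀ (q : ℕ) {F : (Fin q → E) → ℝ}, Measurable F → (∀ y, |F y| ≤ C) →
      iterInt P.toSignedMeasure q F = ∫ y, F y ∂(Measure.pi fun _ => P)
  | 0, F, hF, _ => by
      rw [Measure.pi_of_empty, integral_dirac' _ _ hF.stronglyMeasurable]
      exact congrArg F (Subsingleton.elim _ _)
  | q + 1, F, hF, hC => by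
      rw [integral_pi_fin_succ P
        (Integrable.of_bound hF.aestronglyMeasurable C (ae_of_all _ hC)), iterInt,
        sIntR_toSignedMeasure]
      refine integral_congr_ae (ae_of_all _ fun x => ?_)
      exact iterInt_toSignedMeasure P q
        (hF.comp ((measurable_finCons q).comp measurable_prodMk_left)) fun _ => hC _

variable {q : ℕ} {S : (Fin (q + 1) → EuclideanSpace ℝ (Fin d)) → ℝ} {Sbar : ℝ}

theorem srcVal_toSignedMeasure (P : Measure E) [IsFiniteMeasure P] (hS : Measurable S)
    (hSbdd : ∀ y, |S y| ≤ Sbar) (A : Set E) :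
    srcVal S P.toSignedMeasure A =
      ∫ x in A, ∫ ys, S (Fin.cons x ys) ∂(Measure.pi fun _ => P) ∂P := by
  simp only [srcVal, Measure.toSignedMeasure_toJordanDecomposition, Measure.restrict_zero,
    integral_zero_measure, sub_zero]
  refine integral_congr_ae (ae_of_all _ fun x => ?_)
  exact iterInt_toSignedMeasure P q
    (hS.comp ((measurable_finCons q).comp measurable_prodMk_left)) fun _ => hSbdd _

theorem abs_srcVal_toSignedMeasure_le (P : Measure E) [IsProbabilityMeasure P]
    (hS : Measurable S) (hSbdd : ∀ y, |S y| ≤ Sbar) (A : Set E) :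
    |srcVal S P.toSignedMeasure A| ≤ Sbar * P.real A := by
  rw [srcVal_toSignedMeasure P hS hSbdd, ← Real.norm_eq_abs]
  refine norm_setIntegral_le_of_norm_le_const (measure_lt_top P A) fun x _ => ?_
  simpa using norm_integral_le_of_norm_le_const (μ := Measure.pi fun _ : Fin q => P)
    (ae_of_all _ fun ys => (Real.norm_eq_abs _).trans_le (hSbdd (Fin.cons x ys)))

theorem srcVal_toSignedMeasure_univ (P : Measure E) [IsProbabilityMeasure P]
    (hS : Measurable S) (hSbdd : ∀ y, |S y| ≤ Sbar) {i j : Fin (q + 1)}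
    (hskew : ∀ y, S y = -S (fun m => y (Equiv.swap i j m))) :
    srcVal S P.toSignedMeasure Set.univ = 0 := by
  rw [srcVal_toSignedMeasure P hS hSbdd, setIntegral_univ, ← integral_pi_fin_succ P
    (Integrable.of_bound hS.aestronglyMeasurable Sbar (ae_of_all _ hSbdd))]
  exact integral_pi_eq_zero_of_swap P hskew

theorem MeasureTheory.SignedMeasure.IsProbability.add_smul_srcVal (hS : Measurable S)
    (hSbdd : ∀ y, |S y| ≤ Sbar) {i j : Fin (q + 1)}
    (hskew : ∀ y, S y = -S (fun m => y (Equiv.swap i j m)))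
    {ν H : SignedMeasure E} (hν : ν.IsProbability)
    (hH : ∀ A, MeasurableSet A → H A = srcVal S ν A) {c : ℝ} (hc : 0 ≤ c)
    (hcS : c * Sbar ≤ 1) :
    (ν + c • H).IsProbability := by
  obtain ⟨P, _, rfl⟩ := hν.exists_eq_toSignedMeasure
  refine hν.add_smul (fun A hA => ?_) ?_ hc hcS
  · rw [hH A hA, Measure.toSignedMeasure_apply_measurable hA]
    exact neg_le_of_abs_le (abs_srcVal_toSignedMeasure_le P hS hSbdd A)
  · rw [hH _ .univ]
    exact srcVal_toSignedMeasure_univ P hS hSbdd hskew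

end SourceTerm

namespace IsScheme

variable {d q : ℕ} {φ : EuclideanSpace ℝ (Fin d) → EuclideanSpace ℝ (Fin d)}
  {S : (Fin (q + 1) → EuclideanSpace ℝ (Fin d)) → ℝ} {Sbar T : ℝ} {k : ℕ}
  {μ : ℝ → SignedMeasure (EuclideanSpace ℝ (Fin d))}

theorem isProbability_of_mem_Icc (hμ : IsScheme φ S T k μ) (hS : Measurable S)
    (hSbdd : ∀ y, |S y| ≤ Sbar) {i j : Fin (q + 1)}
    (hskew : ∀ y, S y = -S (fun m => y (Equiv.swap i j m))) (hk : Sbar * T ≤ 2 ^ k)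
    {n : ℕ} (hn : n < 2 ^ k) (hμn : (μ (n * (T / 2 ^ k))).IsProbability) {t : ℝ}
    (ht : t ∈ Set.Icc (n * (T / 2 ^ k)) ((n + 1) * (T / 2 ^ k))) : (μ t).IsProbability := by
  set Δ := T / 2 ^ k
  obtain ⟨⟨H, hH, hsource⟩, ⟨Φ, -, -, hΦ, htransport⟩⟩ := hμ n hn
  have hSbar : 0 ≤ Sbar := (abs_nonneg _).trans (hSbdd 0)
  have hΔS : Δ * Sbar ≤ 1 := by
    rw [div_mul_eq_mul_div, div_le_one (by positivity), mul_comm]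
    exact hk
  have hsource_prob : ∀ u ∈ Set.Ioc (n * Δ) ((n + 1 / 2) * Δ), (μ u).IsProbability := by
    intro u hu
    rw [hsource u hu]
    exact hμn.add_smul_srcVal hS hSbdd hskew hH (by linarith [hu.1]) (by nlinarith [hu.2])
  rcases ht.1.eq_or_lt with rfl | hnt
  · exact hμn
  rcases le_or_gt t ((n + 1 / 2) * Δ) with hhalf | hhalf
  · exact hsource_prob t ⟨hnt, hhalf⟩
  · have hΔ : 0 < Δ := by nlinarith [ht.2]
    rw [htransport t ⟨hhalf, ht.2⟩]
    exact (hsource_prob _ ⟨by nlinarith, le_rfl⟩).map (hΦ _)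

theorem isProbability_of_mem_Icc_zero (hμ : IsScheme φ S T k μ) (hS : Measurable S)
    (hSbdd : ∀ y, |S y| ≤ Sbar) {i j : Fin (q + 1)}
    (hskew : ∀ y, S y = -S (fun m => y (Equiv.swap i j m))) (hk : Sbar * T ≤ 2 ^ k)
    (hT : 0 ≤ T) (hμ0 : (μ 0).IsProbability) :
    ∀ n : ℕ, n ≤ 2 ^ k → ∀ t ∈ Set.Icc 0 (n * (T / 2 ^ k)), (μ t).IsProbability := by
  intro n
  induction n with
  | zero =>
    intro _ t ht
    rwa [le_antisymm (by simpa using ht.2) ht.1]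
  | succ n ih =>
    intro hn t ht
    rcases le_or_gt t (n * (T / 2 ^ k)) with htn | htn
    · exact ih (by omega) t ⟨ht.1, htn⟩
    · have hμn := ih (by omega) _ ⟨by positivity, le_rfl⟩
      exact hμ.isProbability_of_mem_Icc hS hSbdd hskew hk hn hμn
        ⟨htn.le, by exact_mod_cast ht.2⟩

end IsScheme

theorem scheme_preserves_probability_general {d q : ℕ} (T : ℝ)
    (φ : EuclideanSpace ℝ (Fin d) → EuclideanSpace ℝ (Fin d))
    (S : (Fin (q + 1) → EuclideanSpace ℝ (Fin d)) → ℝ) (Sbar : ℝ)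
    (hScont : Continuous S) (hSbdd : ∀ y, |S y| ≤ Sbar)
    (hSskew : ∃ i j : Fin (q + 1), i ≠ j ∧
      ∀ y : Fin (q + 1) → EuclideanSpace ℝ (Fin d),
        S y = - S (fun m => y (Equiv.swap i j m)))
    (k : ℕ) (hk : Sbar * T ≤ 2 ^ k)
    (μ : ℝ → SignedMeasure (EuclideanSpace ℝ (Fin d)))
    (hscheme : IsScheme φ S T k μ)
    (hinit_pos : ∀ A, MeasurableSet A → 0 ≤ μ 0 A)
    (hinit_mass : μ 0 Set.univ = 1) :
    ∀ t ∈ Set.Icc (0 : ℝ) T,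
      (∀ A, MeasurableSet A → 0 ≤ μ t A) ∧ μ t Set.univ = 1 := by
  intro t ht
  obtain ⟨i, j, -, hskew⟩ := hSskew
  have hT : 0 ≤ T := ht.1.trans ht.2
  have hΔ : ((2 ^ k : ℕ) : ℝ) * (T / 2 ^ k) = T := by
    push_cast
    field_simp
  exact hscheme.isProbability_of_mem_Icc_zero hScont.measurable hSbdd hskew hk hT
    ⟨hinit_pos, hinit_mass⟩ (2 ^ k) le_rfl t (by rwa [hΔ])

/-- the operator-splitting scheme preserves probability: if `μ₀` is a
probability measure and `2^k ≥ S̄ T`, then `μ^k_t` is a probability measure for all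
`t ∈ [0,T]`. -/
theorem scheme_preserves_probability {d q : ℕ} (T : ℝ) (hT : 0 < T)
    (φ : EuclideanSpace ℝ (Fin d) → EuclideanSpace ℝ (Fin d)) (Lφ : ℝ≥0)
    (hφ : LipschitzWith Lφ φ)
    (S : (Fin (q + 1) → EuclideanSpace ℝ (Fin d)) → ℝ) (Sbar LS : ℝ)
    (hScont : Continuous S) (hSbdd : ∀ y, |S y| ≤ Sbar)
    (hSlip : ∀ y z, |S y - S z| ≤ LS * ∑ i, ‖y i - z i‖)
    (hSskew : ∃ i j : Fin (q + 1), i ≠ j ∧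
      ∀ y : Fin (q + 1) → EuclideanSpace ℝ (Fin d),
        S y = - S (fun m => y (Equiv.swap i j m)))
    (k : ℕ) (hk : Sbar * T ≤ 2 ^ k)
    (μ : ℝ → SignedMeasure (EuclideanSpace ℝ (Fin d)))
    (hscheme : IsScheme φ S T k μ)
    (hinit_pos : ∀ A, MeasurableSet A → 0 ≤ μ 0 A)
    (hinit_mass : μ 0 Set.univ = 1) :
    ∀ t ∈ Set.Icc (0 : ℝ) T,
      (∀ A, MeasurableSet A → 0 ≤ μ t A) ∧ μ t Set.univ = 1 :=
  scheme_preserves_probability_general T φ S Sbar hScont hSbdd hSskew k hk μ hscheme hinit_pos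
    hinit_mass
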